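/- arXiv:2302.11603 — 7 statements merged into one kernel-verified Lean document; each statement's English description precedes it below -/
import Mathlib

section
/- Let f : ℕ → ℝ be PIL, let n ∈ ℕ, and let kₙ ∈ ℕ be such that no real polynomial of degree at most n agrees with f on kₙ consecutive integer points. Then for every x ∈ ℕ there exists ε > 0 (depending on x, kₙ and f) such that for every real polynomial p of degree at most n there exists y ∈ {x, x+1, …, x+kₙ−1} with |p(y) − f(y)| ≥ ε. That is, for every starting point x there is a bounded interval of kₙ consecutive integers and a gap ε such that no polynomial of degree at most n can approximate f on that interval below that gap. -/
/-- A function `f : ℕ → ℝ` is *PIL* (polynomial-intersection limited) if for every `n`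
there exists `k` such that no real polynomial of degree at most `n` agrees with `f`
on `k` consecutive integer points. -/
def PIL (f : ℕ → ℝ) : Prop :=
  ∀ n : ℕ, ∃ k : ℕ, ∀ p : Polynomial ℝ, p.natDegree ≤ n →
    ∀ x : ℕ, ∃ y : ℕ, x ≤ y ∧ y < x + k ∧ f y ≠ p.eval (y : ℝ)

/-- Lemma (Polynomial of best approximation, integer-domain version): if `f` is PIL and
no polynomial of degree at most `n` agrees with `f` on `kn` consecutive integer points,
then for every starting point `x` there is a gap `ε > 0` such that every polynomial of
degree at most `n` misses `f` by at least `ε` somewhere in `{x, x+1, …, x+kn−1}`. -/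
theorem pil_uniform_gap_on_interval (f : ℕ → ℝ) (hf : PIL f) (n kn : ℕ)
    (hkn : ∀ p : Polynomial ℝ, p.natDegree ≤ n →
      ∀ x : ℕ, ∃ y : ℕ, x ≤ y ∧ y < x + kn ∧ f y ≠ p.eval (y : ℝ)) :
    ∀ x : ℕ, ∃ ε : ℝ, 0 < ε ∧
      ∀ p : Polynomial ℝ, p.natDegree ≤ n →
        ∃ y : ℕ, x ≤ y ∧ y < x + kn ∧ ε ≤ |p.eval (y : ℝ) - f y| := by
  intro x
  -- evaluation linear map on the window
  set L : Polynomial ℝ →ₗ[ℝ] (Fin kn → ℝ) :=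
    LinearMap.pi (fun i : Fin kn => Polynomial.leval ((x + (i : ℕ) : ℕ) : ℝ)) with hL
  have hLapp : ∀ (p : Polynomial ℝ) (i : Fin kn),
      L p i = p.eval ((x + (i : ℕ) : ℕ) : ℝ) := by
    intro p i; simp [hL, Polynomial.leval_apply]
  -- the subspace of evaluation vectors
  set V : Submodule ℝ (Fin kn → ℝ) := (Polynomial.degreeLT ℝ (n + 1)).map L with hV
  haveI : FiniteDimensional ℝ (Polynomial.degreeLT ℝ (n + 1)) :=
    LinearEquiv.finiteDimensional (Polynomial.degreeLTEquiv ℝ (n + 1)).symm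
  haveI : FiniteDimensional ℝ V := by
    rw [hV]; exact Module.Finite.map _ _
  have hVclosed : IsClosed (V : Set (Fin kn → ℝ)) := Submodule.closed_of_finiteDimensional V
  set F : Fin kn → ℝ := fun i => f (x + (i : ℕ)) with hF
  have hFnot : F ∉ (V : Set (Fin kn → ℝ)) := by
    rintro ⟨p, hp, hpe⟩
    have hdeg : p.natDegree ≤ n := by
      rw [SetLike.mem_coe, Polynomial.mem_degreeLT] at hp
      rcases eq_or_ne p 0 with rfl | hp0
      · simp
      · exact Nat.lt_succ_iff.mp ((Polynomial.natDegree_lt_iff_degree_lt hp0).mpr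
          (by exact_mod_cast hp))
    obtain ⟨y, hy1, hy2, hne⟩ := hkn p hdeg x
    have hi : y - x < kn := by omega
    have hxy : x + (y - x) = y := by omega
    apply hne
    have := congrFun hpe ⟨y - x, hi⟩
    rw [hLapp] at this
    simpa [hF, hxy] using this.symm
  -- F is in the open complement of V
  obtain ⟨ε, hε, hball⟩ := Metric.isOpen_iff.mp hVclosed.isOpen_compl F hFnot
  refine ⟨ε, hε, fun p hdeg => ?_⟩
  have hpV : L p ∈ V := by
    refine ⟨p, ?_, rfl⟩
    rw [SetLike.mem_coe, Polynomial.mem_degreeLT]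
    calc p.degree ≤ (p.natDegree : WithBot ℕ) := Polynomial.degree_le_natDegree
      _ ≤ (n : WithBot ℕ) := by exact_mod_cast hdeg
      _ < ((n + 1 : ℕ) : WithBot ℕ) := by exact_mod_cast Nat.lt_succ_self n
  have hnotball : L p ∉ Metric.ball F ε := fun h => (hball h) hpV
  rw [Metric.mem_ball] at hnotball
  have : ¬ ∀ i, dist (L p i) (F i) < ε := by
    intro h
    exact hnotball ((dist_pi_lt_iff hε).mpr h)
  push_neg at this
  obtain ⟨i, hi⟩ := this
  refine ⟨x + (i : ℕ), Nat.le_add_right _ _, by omega, ?_⟩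
  rw [← Real.dist_eq, ← hLapp]
  exact hi
end

section
/- Let f : ℕ → ℝ be PIL and let q ∈ ℕ with q ≥ 1 and n ∈ ℕ. Then there exist T ∈ ℕ and δ > 0 such that for every function g : ℕ → ℝ that is piecewise polynomial with at most q pieces, each of degree at most n, there exists y ∈ ℕ with y ≤ T and |g(y) − f(y)| ≥ δ. That is, the number of pieces and the maximal degree of a piecewise polynomial g determine a guaranteed minimum gap by which g misses f within a guaranteed interval. -/
/-- `g : ℕ → ℝ` is piecewise polynomial with at most `q` pieces, each of degree at
most `n`: there are breakpoints `0 = t 0 ≤ t 1 ≤ …` and polynomials `p 0, …, p (q-1)`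
of degree at most `n` such that `g` agrees with `p i` on `[t i, t (i+1))` for `i < q - 1`
and with `p (q-1)` on `[t (q-1), ∞)`. -/
def IsPiecewisePolyNat (g : ℕ → ℝ) (q n : ℕ) : Prop :=
  ∃ (t : ℕ → ℕ) (p : ℕ → Polynomial ℝ),
    t 0 = 0 ∧ (∀ i, t i ≤ t (i + 1)) ∧
    (∀ i < q, (p i).natDegree ≤ n) ∧
    (∀ i, i + 1 < q → ∀ y : ℕ, t i ≤ y → y < t (i + 1) → g y = (p i).eval (y : ℝ)) ∧
    (∀ y : ℕ, t (q - 1) ≤ y → g y = (p (q - 1)).eval (y : ℝ))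

namespace PILAux

def pidx (q : ℕ) (s : ℕ → ℕ) (y : ℕ) : ℕ :=
  ((Finset.range q).filter (fun i => s i ≤ y ∨ i = 0)).sup id

lemma pidx_lt {q : ℕ} (hq : 0 < q) (s : ℕ → ℕ) (y : ℕ) : pidx q s y < q := by
  apply Finset.sup_lt_iff (by simpa using hq) |>.2
  intro i hi
  simp only [Finset.mem_filter, Finset.mem_range] at hi
  exact hi.1

lemma pidx_mono (q : ℕ) (s : ℕ → ℕ) : Monotone (pidx q s) := by
  intro a b hab
  apply Finset.sup_mono
  intro i hi
  simp only [Finset.mem_filter, Finset.mem_range] at hi ⊢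
  exact ⟨hi.1, hi.2.imp (fun h => h.trans hab) id⟩

lemma le_pidx {q i : ℕ} (hi : i < q) {s : ℕ → ℕ} {y : ℕ} (h : s i ≤ y) :
    i ≤ pidx q s y :=
  Finset.le_sup (f := id) (by simp [Finset.mem_filter, Finset.mem_range, hi, h])

lemma pidx_mem {q : ℕ} (hq : 0 < q) (s : ℕ → ℕ) (y : ℕ) :
    s (pidx q s y) ≤ y ∨ pidx q s y = 0 := by
  have hne : ((Finset.range q).filter (fun i => s i ≤ y ∨ i = 0)).Nonempty :=
    ⟨0, by simp [Finset.mem_filter, Finset.mem_range, hq]⟩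
  obtain ⟨b, hb, he⟩ := Finset.exists_mem_eq_sup _ hne id
  rw [pidx, he]
  simpa using (Finset.mem_filter.1 hb).2

noncomputable def Phi (q n T : ℕ) (hq : 0 < q) (s : ℕ → ℕ) :
    (Fin q → Polynomial.degreeLT ℝ (n+1)) →ₗ[ℝ] (Fin (T+1) → ℝ) :=
  LinearMap.pi fun y : Fin (T+1) =>
    (Polynomial.leval ((y : ℕ) : ℝ)).comp
      (((Polynomial.degreeLT ℝ (n+1)).subtype).comp
        (LinearMap.proj ⟨pidx q s (y : ℕ), pidx_lt hq s _⟩))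

lemma Phi_apply (q n T : ℕ) (hq : 0 < q) (s : ℕ → ℕ)
    (p : Fin q → Polynomial.degreeLT ℝ (n+1)) (y : Fin (T+1)) :
    Phi q n T hq s p y =
      ((p ⟨pidx q s (y : ℕ), pidx_lt hq s _⟩ : Polynomial ℝ)).eval ((y : ℕ) : ℝ) := by
  simp [Phi, Polynomial.leval_apply]

noncomputable instance (n : ℕ) : FiniteDimensional ℝ (Polynomial.degreeLT ℝ (n+1)) :=
  LinearEquiv.finiteDimensional (Polynomial.degreeLTEquiv ℝ (n+1)).symm

lemma range_closed (q n T : ℕ) (hq : 0 < q) (s : ℕ → ℕ) :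
    IsClosed ((LinearMap.range (Phi q n T hq s) : Submodule ℝ (Fin (T+1) → ℝ)) : Set (Fin (T+1) → ℝ)) :=
  Submodule.closed_of_finiteDimensional _

end PILAux


/-- If `f` is PIL, then for every number of pieces `q ≥ 1` and degree bound `n` there are
a point `T` and a gap `δ > 0` such that every piecewise polynomial with at most `q` pieces
of degree at most `n` misses `f` by at least `δ` at some `y ≤ T`. -/
theorem pil_piecewise_poly_gap (f : ℕ → ℝ) (hf : PIL f) (q n : ℕ) (hq : 1 ≤ q) :
    ∃ T : ℕ, ∃ δ : ℝ, 0 < δ ∧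
      ∀ g : ℕ → ℝ, IsPiecewisePolyNat g q n →
        ∃ y : ℕ, y ≤ T ∧ δ ≤ |g y - f y| := by
  classical
  obtain ⟨k0, hk0⟩ := hf n
  set k : ℕ := k0 + 1 with hkdef
  have hk1 : 1 ≤ k := by omega
  have hkprop : ∀ p : Polynomial ℝ, p.natDegree ≤ n →
      ∀ x : ℕ, ∃ y : ℕ, x ≤ y ∧ y < x + k ∧ f y ≠ p.eval (y : ℝ) := by
    intro p hp x
    obtain ⟨y, h1, h2, h3⟩ := hk0 p hp x
    exact ⟨y, h1, by omega, h3⟩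
  set T : ℕ := q * k with hT
  have hq0 : 0 < q := hq
  set fvec : Fin (T+1) → ℝ := fun y => f (y : ℕ) with hfvec
  -- Key: fvec is not in any of the ranges
  have key : ∀ s : ℕ → ℕ,
      fvec ∉ ((LinearMap.range (PILAux.Phi q n T hq0 s) : Submodule ℝ _) : Set (Fin (T+1) → ℝ)) := by
    intro s hmem
    obtain ⟨p, hp⟩ := hmem
    set w : ℕ → ℕ := fun y => PILAux.pidx q s y with hw
    have hwmono : Monotone w := PILAux.pidx_mono q s
    have hblock : ∃ j < q, w (j*k) = w (j*k + (k-1)) := by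
      by_contra hc
      push_neg at hc
      have step : ∀ j : ℕ, j ≤ q → j ≤ w (j*k) := by
        intro j
        induction j with
        | zero => intro _; exact Nat.zero_le _
        | succ j ih =>
          intro hj
          have hj' : j < q := by omega
          have h1 : w (j*k) ≤ w (j*k + (k-1)) := hwmono (Nat.le_add_right _ _)
          have h2 : w (j*k) ≠ w (j*k + (k-1)) := hc j hj'
          have heq : (j+1)*k = j*k + k := by ring
          have h3 : w (j*k + (k-1)) ≤ w ((j+1)*k) := hwmono (by omega)
          have h4 := ih (by omega)
          omega
      have h5 := step q le_rfl
      have h6 : w (q*k) < q := PILAux.pidx_lt hq0 s _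
      omega
    obtain ⟨j, hjq, hjw⟩ := hblock
    set i : ℕ := w (j*k) with hi
    have hiq : i < q := PILAux.pidx_lt hq0 s _
    set P : Polynomial ℝ := (p ⟨i, hiq⟩ : Polynomial ℝ) with hP
    have hPdeg : P.natDegree ≤ n := by
      have hmem2 := (p ⟨i, hiq⟩).2
      rw [Polynomial.mem_degreeLT] at hmem2
      by_cases h0 : P = 0
      · simp [h0]
      · have := (Polynomial.natDegree_lt_iff_degree_lt h0).2 (by exact_mod_cast hmem2)
        omega
    obtain ⟨y, hy1, hy2, hy3⟩ := hkprop P hPdeg (j*k)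
    have hyT : y ≤ T := by
      have h7 : (j+1)*k ≤ q*k := Nat.mul_le_mul_right _ (by omega)
      have heq : (j+1)*k = j*k + k := by ring
      omega
    have hwy : w y = i := by
      have h1 : w (j*k) ≤ w y := hwmono hy1
      have h2 : w y ≤ w (j*k + (k-1)) := hwmono (by omega)
      omega
    have hfy := congrFun hp (⟨y, by omega⟩ : Fin (T+1))
    rw [PILAux.Phi_apply] at hfy
    have hfin : (⟨PILAux.pidx q s ((⟨y, by omega⟩ : Fin (T+1)) : ℕ),
        PILAux.pidx_lt hq0 s _⟩ : Fin q) = ⟨i, hiq⟩ := Fin.mk_eq_mk.mpr hwy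
    rw [hfin] at hfy
    exact hy3 hfy.symm
  -- finitely many capped patterns
  set pat : (Fin q → Fin (T+2)) → (ℕ → ℕ) :=
    fun σ i => if h : i < q then (σ ⟨i, h⟩ : ℕ) else 0 with hpat
  set D : (Fin q → Fin (T+2)) → ℝ := fun σ =>
    Metric.infDist fvec
      ((LinearMap.range (PILAux.Phi q n T hq0 (pat σ)) : Submodule ℝ _) : Set (Fin (T+1) → ℝ))
    with hD
  have hDpos : ∀ σ, 0 < D σ := by
    intro σ
    have hcl := PILAux.range_closed q n T hq0 (pat σ)
    have hne : ((LinearMap.range (PILAux.Phi q n T hq0 (pat σ)) : Submodule ℝ _) :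
        Set (Fin (T+1) → ℝ)).Nonempty := ⟨0, Submodule.zero_mem _⟩
    exact (hcl.notMem_iff_infDist_pos hne).1 (key (pat σ))
  set δ : ℝ := Finset.univ.inf' Finset.univ_nonempty D with hδ
  have hδpos : 0 < δ := by
    rw [hδ, Finset.lt_inf'_iff]
    intro σ _
    exact hDpos σ
  refine ⟨T, δ, hδpos, ?_⟩
  intro g hg
  obtain ⟨t, p, ht0, htmono, hdeg, hpiece, hlastp⟩ := hg
  by_contra hcon
  push_neg at hcon
  set σ : Fin q → Fin (T+2) := fun i => ⟨min (t i) (T+1), by omega⟩ with hσ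
  set s : ℕ → ℕ := pat σ with hs
  have hsdef : ∀ i, i < q → s i = min (t i) (T+1) := by
    intro i hi
    simp only [hs, hpat]
    rw [dif_pos hi]
  have hidx : ∀ y : ℕ, y ≤ T → PILAux.pidx q s y = PILAux.pidx q t y := by
    intro y hy
    apply le_antisymm
    · rcases PILAux.pidx_mem hq0 s y with h | h
      · have hlt := PILAux.pidx_lt hq0 s y
        rw [hsdef _ hlt] at h
        exact PILAux.le_pidx hlt (by omega)
      · omega
    · rcases PILAux.pidx_mem hq0 t y with h | h
      · have hlt := PILAux.pidx_lt hq0 t y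
        exact PILAux.le_pidx hlt (by rw [hsdef _ hlt]; omega)
      · omega
  have hp'mem : ∀ i : Fin q, p (i : ℕ) ∈ Polynomial.degreeLT ℝ (n+1) := by
    intro i
    rw [Polynomial.mem_degreeLT]
    calc (p (i : ℕ)).degree ≤ ((p (i : ℕ)).natDegree : WithBot ℕ) :=
          Polynomial.degree_le_natDegree
      _ ≤ (n : WithBot ℕ) := by exact_mod_cast hdeg (i : ℕ) i.2
      _ < ((n + 1 : ℕ) : WithBot ℕ) := by exact_mod_cast Nat.lt_succ_self n
  set p' : Fin q → Polynomial.degreeLT ℝ (n+1) := fun i => ⟨p (i : ℕ), hp'mem i⟩ with hp'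
  have hgval : ∀ y : ℕ, g y = (p (PILAux.pidx q t y)).eval (y : ℝ) := by
    intro y
    set i := PILAux.pidx q t y with hidef
    have hiq : i < q := PILAux.pidx_lt hq0 t y
    have hty : t i ≤ y := by
      rcases PILAux.pidx_mem hq0 t y with h | h
      · exact h
      · rw [← hidef] at h
        rw [h, ht0]
        omega
    by_cases hlast' : i + 1 < q
    · have hy2 : y < t (i + 1) := by
        by_contra hy2
        push_neg at hy2
        have := PILAux.le_pidx hlast' hy2
        omega
      exact hpiece i hlast' y hty hy2
    · have hieq : i = q - 1 := by omega
      rw [hieq]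
      exact hlastp y (by rw [← hieq]; exact hty)
  have hgmem : (fun y : Fin (T+1) => g (y : ℕ)) ∈
      ((LinearMap.range (PILAux.Phi q n T hq0 s) : Submodule ℝ _) : Set (Fin (T+1) → ℝ)) := by
    refine ⟨p', ?_⟩
    funext y
    rw [PILAux.Phi_apply]
    have hyT : (y : ℕ) ≤ T := by omega
    show (p (PILAux.pidx q s (y : ℕ))).eval (((y : ℕ) : ℝ)) = g (y : ℕ)
    rw [hidx (y : ℕ) hyT]
    exact (hgval (y : ℕ)).symm
  have h1 : δ ≤ D σ := Finset.inf'_le D (Finset.mem_univ σ)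
  have h2 : D σ ≤ dist fvec (fun y : Fin (T+1) => g (y : ℕ)) :=
    Metric.infDist_le_dist_of_mem hgmem
  have h3 : dist fvec (fun y : Fin (T+1) => g (y : ℕ)) < δ := by
    rw [dist_pi_lt_iff hδpos]
    intro y
    have hy := hcon (y : ℕ) (by omega)
    rw [Real.dist_eq]
    have : fvec y = f (y : ℕ) := rfl
    rw [this, abs_sub_comm]
    exact hy
  linarith
end

section
/- Let g : ℕ₊ × ℕ₊ → ℝ (arguments written (k, c)) be describable, i.e., there exists a finite set F of good real polynomials in the two variables k, c such that for all k, c ∈ ℕ₊ there exists p ∈ F with p(k, c) = g(k, c). Then for every ε > 0 there exist k, c ∈ ℕ₊ such that |g(k, c) − c| > ε. In particular, no describable function uniformly approximates the function (k, c) ↦ c. -/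
open MvPolynomial

/-- A two-variable real polynomial (variable `0` = k, variable `1` = c) is *good* if
every monomial with positive degree in `c` also has positive degree in `k`. -/
def GoodPoly (p : MvPolynomial (Fin 2) ℝ) : Prop :=
  ∀ m ∈ p.support, 0 < m 1 → 0 < m 0

/-! If `|g(k, c) - c| ≤ ε` everywhere, then for each `k` some `p ∈ F` has `|p(k, c) - c| ≤ ε` for
infinitely many `c`, so the polynomial `p(k, ·) - c` is bounded along a sequence tending to
infinity, hence constant: the `c`-coefficient `a(k)` of `p`, a polynomial in `k`, equals `1`
at `k`. Pigeonholing over `k`, one `p` has `a(k) = 1` for infinitely many `k`, so `a = 1`;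
but goodness forces `a(0) = 0`. -/

open Filter Polynomial.Bivariate

theorem Finset.exists_frequently_of_forall_pos {α : Type*} {F : Finset α} {P : α → ℕ → Prop}
    (h : ∀ n, 0 < n → ∃ p ∈ F, P p n) : ∃ p ∈ F, ∃ᶠ n in atTop, P p n :=
  F.frequently_exists.mp ((eventually_gt_atTop 0).mono h).frequently

namespace Polynomial

variable {𝕜 : Type*} [NormedField 𝕜] [LinearOrder 𝕜] [IsStrictOrderedRing 𝕜]

theorem eq_of_frequently_eval_eq {P Q : 𝕜[X]} (h : ∃ᶠ x in atTop, P.eval x = Q.eval x) :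
    P = Q := by
  by_contra hne
  refine h <| (eventually_atTop_not_isRoot _ (sub_ne_zero.mpr hne)).mono fun x hx heq => hx ?_
  rw [IsRoot, eval_sub, heq, sub_self]

variable [OrderTopology 𝕜]

theorem degree_le_zero_of_frequently_abs_eval_le {P : 𝕜[X]} {B : 𝕜}
    (h : ∃ᶠ x in atTop, |P.eval x| ≤ B) : P.degree ≤ 0 := by
  by_contra! hdeg
  exact h <| ((abs_tendsto_atTop P hdeg).eventually_gt_atTop B).mono fun x hx => not_le.mpr hx

theorem coeff_one_eq_one_of_frequently_abs_eval_sub_le {P : 𝕜[X]} {B : 𝕜}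
    (h : ∃ᶠ x in atTop, |P.eval x - x| ≤ B) : P.coeff 1 = 1 := by
  have hdeg : (P - X).degree ≤ 0 :=
    degree_le_zero_of_frequently_abs_eval_le (by simpa only [eval_sub, eval_X] using h)
  have := coeff_eq_zero_of_degree_lt (n := 1) (hdeg.trans_lt (by norm_num))
  rwa [coeff_sub, coeff_X_one, sub_eq_zero] at this

end Polynomial

namespace Polynomial.Bivariate

variable {R : Type*} [CommRing R]

theorem evalEval_equivMvPolynomial_symm (x y : R) (p : MvPolynomial (Fin 2) R) :
    ((equivMvPolynomial R).symm p).evalEval x y = MvPolynomial.eval ![x, y] p := by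
  induction p using MvPolynomial.induction_on with
  | C a => simp
  | add p q hp hq => simp [hp, hq]
  | mul_X p i hp => fin_cases i <;> simp [hp, evalEval_C]

theorem equivMvPolynomial_symm_monomial (m : Fin 2 →₀ ℕ) (a : R) :
    (equivMvPolynomial R).symm (MvPolynomial.monomial m a) = C (C a * X ^ m 0) * X ^ m 1 := by
  simp only [equivMvPolynomial, AlgEquiv.ofAlgHom_symm_apply, MvPolynomial.aeval_monomial,
    algebraMap_apply, algebraMap_eq, Finsupp.prod_fintype, pow_zero, implies_true,
    Fin.prod_univ_two, Matrix.cons_val_zero, Matrix.cons_val_one, map_mul, map_pow]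
  ring

end Polynomial.Bivariate

/-- `(equivMvPolynomial ℝ).symm p` is `p` as a polynomial in `c` over `ℝ[k]`. -/
theorem GoodPoly.eval_zero_coeff_one {p : MvPolynomial (Fin 2) ℝ} (hp : GoodPoly p) :
    (((equivMvPolynomial ℝ).symm p).coeff 1).eval 0 = 0 := by
  conv_lhs => rw [p.as_sum]
  simp only [map_sum, equivMvPolynomial_symm_monomial, Polynomial.coeff_C_mul_X_pow,
    Polynomial.finsetSum_coeff, Polynomial.eval_finsetSum]
  refine Finset.sum_eq_zero fun m hm => ?_
  split_ifs with h
  · simp [(hp m hm (by omega)).ne']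
  · exact Polynomial.eval_zero

/-- If `g : ℕ₊ × ℕ₊ → ℝ` is describable, i.e. weakly-described by a finite set of good
polynomials in `k, c`, then `g` does not uniformly approximate `(k, c) ↦ c`. -/
theorem describable_not_approx_c (g : ℕ → ℕ → ℝ) (F : Finset (MvPolynomial (Fin 2) ℝ))
    (hgood : ∀ p ∈ F, GoodPoly p)
    (hdesc : ∀ k c : ℕ, 0 < k → 0 < c →
      ∃ p ∈ F, eval ![(k : ℝ), (c : ℝ)] p = g k c) :
    ∀ ε : ℝ, 0 < ε → ∃ k c : ℕ, 0 < k ∧ 0 < c ∧ |g k c - (c : ℝ)| > ε := by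
  intro ε _
  by_contra! hclose
  set φ := (equivMvPolynomial ℝ).symm
  have hslope : ∀ k : ℕ, 0 < k → ∃ p ∈ F, ((φ p).coeff 1).eval (k : ℝ) = 1 := by
    intro k hk
    obtain ⟨p, hpF, hp⟩ := Finset.exists_frequently_of_forall_pos (P := fun p (c : ℕ) =>
        |((φ p).map (Polynomial.evalRingHom (k : ℝ))).eval (c : ℝ) - c| ≤ ε) fun c hc => by
      obtain ⟨p, hpF, hpg⟩ := hdesc k c hk hc
      refine ⟨p, hpF, ?_⟩
      rw [Polynomial.map_evalRingHom_eval, evalEval_equivMvPolynomial_symm, hpg]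
      exact hclose k c hk hc
    refine ⟨p, hpF, ?_⟩
    rw [← Polynomial.coe_evalRingHom, ← Polynomial.coeff_map]
    exact Polynomial.coeff_one_eq_one_of_frequently_abs_eval_sub_le
      (tendsto_natCast_atTop_atTop.frequently hp)
  obtain ⟨p, hpF, hp⟩ := Finset.exists_frequently_of_forall_pos hslope
  have hone : (φ p).coeff 1 = 1 := Polynomial.eq_of_frequently_eval_eq
    (tendsto_natCast_atTop_atTop.frequently (hp.mono fun k hk => by rwa [Polynomial.eval_one]))
  have hzero : ((φ p).coeff 1).eval 0 = 0 := (hgood p hpF).eval_zero_coeff_one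
  simp [hone] at hzero
end

section
/- Let F be a finite set of real polynomials in the two variables k, c such that in every p ∈ F the coefficient of the monomial k·c is zero, and let h : ℕ₊ × ℕ₊ → ℝ be a function such that for all k, c ∈ ℕ₊ there exists p ∈ F with p(k, c) = h(k, c). Then for every ε > 0 there exist k, c ∈ ℕ₊ such that |h(k, c)/(k+1) − kc/(k+1)| > ε. In particular, (k, c) ↦ h(k, c)/(k+1) does not uniformly approximate (k, c) ↦ kc/(k+1). -/
/-!
Suppose `|h(k, c) - kc| ≤ ε(k + 1)` for all `k, c ≥ 1`. By pigeonhole over the finite set `F`, one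
`p ∈ F` agrees with `h` for infinitely many `k` at each of infinitely many `c`. For such a `c`,
`k ↦ p(k, c) - ck` is a polynomial bounded by a linear function on an unbounded set, so its
`k`-coefficient `r(c) - c` (with `r(c)` the `k`-coefficient of `p(k, c)`) has absolute value at
most `ε`. Now `c ↦ r(c) - c` is a polynomial bounded on an unbounded set, so its `c`-coefficient,
which is the `kc`-coefficient of `p` minus `1`, vanishes. This contradicts the `kc`-coefficient of `p` being `0`.
-/

open Filter Topology MvPolynomial

namespace Polynomial

theorem abs_coeff_one_le_of_frequently_abs_eval_le {f : ℝ[X]} {A B : ℝ}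
    (hf : ∃ᶠ x in atTop, |f.eval x| ≤ A * x + B) : |f.coeff 1| ≤ A := by
  set C := B + |f.coeff 0|
  have hdivX : ∀ x, 0 < x → |f.eval x| ≤ A * x + B → |f.divX.eval x| ≤ A + C / x := by
    intro x hx hfx
    have hsplit : f.eval x = f.divX.eval x * x + f.coeff 0 := by
      conv_lhs => rw [← divX_mul_X_add f]
      simp
    rw [add_div' _ _ _ hx.ne', le_div_iff₀ hx, ← abs_of_pos hx, ← abs_mul, abs_of_pos hx]
    calc |f.divX.eval x * x| ≤ |f.eval x| + |f.coeff 0| := by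
          simpa [hsplit] using abs_sub (f.eval x) (f.coeff 0)
      _ ≤ A * x + C := by linarith
  set l := atTop ⊓ 𝓟 {x | |f.divX.eval x| ≤ A + C / x}
  have : l.NeBot := frequently_iff_neBot.mp <|
    (hf.and_eventually (eventually_gt_atTop 0)).mono fun x hx => hdivX x hx.2 hx.1
  have hbound : ∀ᶠ x in l, |f.divX.eval x| ≤ A + C / x :=
    eventually_inf_principal.mpr (Eventually.of_forall fun _ hx => hx)
  have hlim : Tendsto (fun x => A + C / x) l (𝓝 A) := by
    simpa using (tendsto_const_nhds.add (tendsto_const_nhds.div_atTop tendsto_id)).mono_left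
      (inf_le_left : l ≤ atTop)
  have hdeg : f.divX.degree ≤ 0 := by
    by_contra! hpos
    exact not_tendsto_nhds_of_tendsto_atTop (tendsto_atTop_mono' l hbound
      ((abs_tendsto_atTop _ hpos).mono_left inf_le_left)) A hlim
  have hconst : ∀ x, |f.divX.eval x| = |f.coeff 1| := fun x => by
    rw [eq_C_of_degree_le_zero hdeg, eval_C, coeff_divX]
  exact ge_of_tendsto hlim (hbound.mono fun x hx => hconst x ▸ hx)

end Polynomial

namespace MvPolynomial

theorem abs_eval_coeff_one_finSuccEquiv_le {n : ℕ} {p : MvPolynomial (Fin (n + 1)) ℝ}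
    {s : Fin n → ℝ} {A B : ℝ} (hp : ∃ᶠ x in atTop, |eval (Fin.cons x s) p| ≤ A * x + B) :
    |eval s ((finSuccEquiv ℝ n p).coeff 1)| ≤ A := by
  simpa only [Polynomial.coeff_map] using
    Polynomial.abs_coeff_one_le_of_frequently_abs_eval_le
      (f := (finSuccEquiv ℝ n p).map (eval s)) (by simpa only [eval_eq_eval_mv_eval'] using hp)

theorem coeff_X0_X1_eq_of_frequently_abs_eval_sub_le {p : MvPolynomial (Fin 2) ℝ} {a A B : ℝ}
    (hp : ∃ᶠ c in atTop, ∃ᶠ k in atTop, |eval ![k, c] p - a * k * c| ≤ A * k + B) :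
    coeff (Finsupp.single 0 1 + Finsupp.single 1 1) p = a := by
  set m : Fin 2 →₀ ℕ := Finsupp.single 0 1 + Finsupp.single 1 1
  set r := (finSuccEquiv ℝ 1 (p - monomial m a)).coeff 1
  -- A bound uniform in `c` is a linear bound of slope `0`, so the same lemma applies again.
  have hr : ∃ᶠ c in atTop, |eval (Fin.cons c ![]) r| ≤ 0 * c + A := hp.mono fun c hc => by
    simpa using abs_eval_coeff_one_finSuccEquiv_le (s := ![c]) (A := A) (B := B) <|
      hc.mono fun k hk => by
        simpa [m, eval_monomial, Finsupp.prod_add_index, pow_add, mul_assoc] using hk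
  have hcoeff : eval ![] ((finSuccEquiv ℝ 0 r).coeff 1) = coeff m p - a := by
    rw [eq_C_of_isEmpty ((finSuccEquiv ℝ 0 r).coeff 1), eval_C, finSuccEquiv_coeff_coeff,
      finSuccEquiv_coeff_coeff]
    have hm : Finsupp.cons 1 (Finsupp.cons 1 0) = m := by
      ext i; fin_cases i <;> simp [m, Finsupp.cons]
    rw [hm, coeff_sub, coeff_monomial, if_pos rfl]
  have := abs_eval_coeff_one_finSuccEquiv_le hr
  rw [hcoeff] at this
  linarith [abs_nonpos_iff.mp this]

end MvPolynomial

/-- If `h : ℕ₊ × ℕ₊ → ℝ` is weakly-described by a finite set of two-variable polynomials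
(variable `0` = k, variable `1` = c) in each of which the coefficient of the monomial `k·c`
is zero, then `(k, c) ↦ h(k, c)/(k+1)` does not uniformly approximate
`(k, c) ↦ kc/(k+1)`. -/
theorem no_kc_monomial_not_approx (h : ℕ → ℕ → ℝ) (F : Finset (MvPolynomial (Fin 2) ℝ))
    (hcoeff : ∀ p ∈ F,
      MvPolynomial.coeff (Finsupp.single 0 1 + Finsupp.single 1 1) p = 0)
    (hdesc : ∀ k c : ℕ, 0 < k → 0 < c →
      ∃ p ∈ F, eval ![(k : ℝ), (c : ℝ)] p = h k c) :
    ∀ ε : ℝ, 0 < ε → ∃ k c : ℕ, 0 < k ∧ 0 < c ∧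
      |h k c / ((k : ℝ) + 1) - (k : ℝ) * (c : ℝ) / ((k : ℝ) + 1)| > ε := by
  intro ε _
  by_contra! hclose
  have hbound : ∀ k c : ℕ, 0 < k → 0 < c → |h k c - k * c| ≤ ε * k + ε := by
    intro k c hk hc
    have hk1 : (0 : ℝ) < k + 1 := by positivity
    have := hclose k c hk hc
    rwa [← sub_div, abs_div, abs_of_pos hk1, div_le_iff₀ hk1, mul_add_one] at this
  obtain ⟨p, hpF, hp⟩ : ∃ p ∈ F, ∃ᶠ c : ℕ in atTop, ∃ᶠ k : ℕ in atTop,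
      0 < k ∧ 0 < c ∧ eval ![(k : ℝ), (c : ℝ)] p = h k c := by
    refine F.frequently_exists.mp (Eventually.frequently ?_)
    filter_upwards [eventually_gt_atTop 0] with c hc
    refine F.frequently_exists.mp (Eventually.frequently ?_)
    filter_upwards [eventually_gt_atTop 0] with k hk
    obtain ⟨p, hpF, hpk⟩ := hdesc k c hk hc
    exact ⟨p, hpF, hk, hc, hpk⟩
  have hkc : coeff (Finsupp.single 0 1 + Finsupp.single 1 1) p = 1 :=
    coeff_X0_X1_eq_of_frequently_abs_eval_sub_le (A := ε) (B := ε) <|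
      tendsto_natCast_atTop_atTop.frequently <| hp.mono fun c hc =>
        tendsto_natCast_atTop_atTop.frequently <| hc.mono fun k ⟨hk, hc, hpk⟩ => by
          simpa [hpk] using hbound k c hk hc
  rw [hcoeff p hpF] at hkc
  exact zero_ne_one hkc
end

section
/- Let F be a finite set of good real polynomials in the two variables k, c such that in every p ∈ F the coefficient of the monomial k³·c is zero, and let h : ℕ₊ × ℕ₊ → ℝ be a function such that for all k, c ∈ ℕ₊ there exists p ∈ F with p(k, c) = h(k, c). Then for every ε > 0 there exist k, c ∈ ℕ₊ such that |h(k, c)/(k³+k²+kc) − (k²+kc)kc/(k³+k²+kc)| > ε. In particular, (k, c) ↦ h(k, c)/(k³+k²+kc) does not uniformly approximate (k, c) ↦ (k²+kc)kc/(k³+k²+kc). -/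
open MvPolynomial

/-! On the curve `c = k ^ N`, with `N` larger than every degree in `k` occurring in `F`, each
`p ∈ F` becomes a one-variable polynomial whose coefficient of `k ^ (N + 3)` is the coefficient
of `k ^ 3 * c` in `p`, i.e. zero, whereas the target `(k ^ 2 + k * c) * k * c` becomes
`k ^ (N + 3) + k ^ (2 * N + 2)`. Their difference therefore has degree at least `N + 3`, so for
large `k` it beats `3 * ε * k ^ (N + 1) ≥ ε * (k ^ 3 + k ^ 2 + k * c)` for all `p ∈ F` at once. -/

open Filter

lemma eval_aeval_X_X_pow {R : Type*} [CommSemiring R] (p : MvPolynomial (Fin 2) R) (N : ℕ)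
    (x : R) : (aeval ![Polynomial.X, Polynomial.X ^ N] p).eval x = eval ![x, x ^ N] p := by
  rw [← Polynomial.coe_aeval_eq_eval, comp_aeval_apply, ← aeval_eq_eval]
  congr 1
  ext i; fin_cases i <;> simp

lemma coeff_aeval_X_X_pow {R : Type*} [CommSemiring R] (p : MvPolynomial (Fin 2) R) (N n : ℕ) :
    (aeval ![Polynomial.X, Polynomial.X ^ N] p).coeff n =
      ∑ d ∈ p.support, if d 0 + N * d 1 = n then p.coeff d else 0 := by
  rw [aeval_def, eval₂_eq', Polynomial.finsetSum_coeff]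
  refine Finset.sum_congr rfl fun d _ => ?_
  have hmonomial : ∏ i, ![Polynomial.X, Polynomial.X ^ N] i ^ d i =
      (Polynomial.X : Polynomial R) ^ (d 0 + N * d 1) := by
    simp [Fin.prod_univ_two, ← pow_mul, ← pow_add]
  rw [hmonomial, Polynomial.algebraMap_eq, Polynomial.coeff_C_mul, Polynomial.coeff_X_pow]
  simp [eq_comm]

/-- `k ^ a * c ^ b` goes to `k ^ (a + N * b)`, and `a + N * b = N + 3` with `a < N + 3`, `4 ≤ N`
forces `(a, b) = (3, 1)`. -/
lemma coeff_aeval_X_X_pow_add_three {R : Type*} [CommSemiring R] {p : MvPolynomial (Fin 2) R}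
    {N : ℕ} (hN : 4 ≤ N) (hdeg : p.degreeOf 0 < N + 3) :
    (aeval ![Polynomial.X, Polynomial.X ^ N] p).coeff (N + 3) =
      p.coeff (Finsupp.single 0 3 + Finsupp.single 1 1) := by
  rw [coeff_aeval_X_X_pow, Finset.sum_eq_single (Finsupp.single 0 3 + Finsupp.single 1 1)]
  · simp [add_comm 3 N]
  · intro d hd hne
    refine if_neg fun hdN => hne ?_
    have hd0 := monomial_le_degreeOf 0 hd
    have hd1 : d 1 = 1 := by
      have : d 1 < 2 := Nat.lt_of_mul_lt_mul_left (a := N) (by omega)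
      obtain h1 | h1 : d 1 = 0 ∨ d 1 = 1 := by omega
      · rw [h1] at hdN; omega
      · exact h1
    rw [hd1, mul_one] at hdN
    ext i; fin_cases i <;> simp <;> omega
  · intro hnot
    simp [notMem_support_iff.mp hnot]

lemma Polynomial.eventually_mul_pow_lt_abs_eval {𝕜 : Type*} [NormedField 𝕜] [LinearOrder 𝕜]
    [IsStrictOrderedRing 𝕜] [OrderTopology 𝕜] {P : Polynomial 𝕜} {m : ℕ} (hm : m < P.natDegree)
    (C : 𝕜) : ∀ᶠ x in atTop, C * x ^ m < |P.eval x| := by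
  have hdeg : (X ^ m : Polynomial 𝕜).degree < P.degree := by
    rw [degree_X_pow]; exact coe_lt_degree.mpr hm
  filter_upwards [(P.abs_div_tendsto_atTop_atTop_of_degree_gt _ hdeg
    (pow_ne_zero _ X_ne_zero)).eventually_gt_atTop C, eventually_gt_atTop 0] with x hx hx0
  rw [eval_pow, eval_X, abs_div, abs_pow, abs_of_pos hx0, lt_div_iff₀ (by positivity)] at hx
  exact hx

lemma abs_sub_le_of_abs_div_sub_le {x y ε : ℝ} {N : ℕ} (hx : 1 ≤ x) (hN : 2 ≤ N)
    (h : |y / (x ^ 3 + x ^ 2 + x * x ^ N) -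
      (x ^ 2 + x * x ^ N) * x * x ^ N / (x ^ 3 + x ^ 2 + x * x ^ N)| ≤ ε) :
    |y - x ^ (N + 3) - x ^ (2 * N + 2)| ≤ 3 * ε * x ^ (N + 1) := by
  have hD : 0 < x ^ 3 + x ^ 2 + x * x ^ N := by positivity
  have hDle : x ^ 3 + x ^ 2 + x * x ^ N ≤ 3 * x ^ (N + 1) := by
    have h3 : x ^ 3 ≤ x ^ (N + 1) := pow_le_pow_right₀ hx (by omega)
    have h2 : x ^ 2 ≤ x ^ (N + 1) := pow_le_pow_right₀ hx (by omega)
    linarith [pow_succ' x N]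
  rw [div_sub_div_same, abs_div, abs_of_pos hD, div_le_iff₀ hD] at h
  have hε : 0 ≤ ε := nonneg_of_mul_nonneg_left ((abs_nonneg _).trans h) hD
  calc |y - x ^ (N + 3) - x ^ (2 * N + 2)|
      = |y - (x ^ 2 + x * x ^ N) * x * x ^ N| := by ring_nf
    _ ≤ ε * (x ^ 3 + x ^ 2 + x * x ^ N) := h
    _ ≤ 3 * ε * x ^ (N + 1) := by nlinarith

theorem no_k3c_monomial_not_approx_general (h : ℕ → ℕ → ℝ)
    (F : Finset (MvPolynomial (Fin 2) ℝ))
    (hcoeff : ∀ p ∈ F,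
      MvPolynomial.coeff (Finsupp.single 0 3 + Finsupp.single 1 1) p = 0)
    (hdesc : ∀ k c : ℕ, 0 < k → 0 < c →
      ∃ p ∈ F, eval ![(k : ℝ), (c : ℝ)] p = h k c) :
    ∀ ε : ℝ, 0 < ε → ∃ k c : ℕ, 0 < k ∧ 0 < c ∧
      |h k c / ((k : ℝ) ^ 3 + (k : ℝ) ^ 2 + (k : ℝ) * (c : ℝ)) -
        ((k : ℝ) ^ 2 + (k : ℝ) * (c : ℝ)) * (k : ℝ) * (c : ℝ) /
          ((k : ℝ) ^ 3 + (k : ℝ) ^ 2 + (k : ℝ) * (c : ℝ))| > ε := by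
  intro ε _
  by_contra! hclose
  set N := F.sup (fun p => p.degreeOf 0) + 4
  set Q : MvPolynomial (Fin 2) ℝ → Polynomial ℝ := fun p =>
    aeval ![Polynomial.X, Polynomial.X ^ N] p - Polynomial.X ^ (N + 3) - Polynomial.X ^ (2 * N + 2)
  have hQdeg (p : MvPolynomial (Fin 2) ℝ) (hp : p ∈ F) : N + 1 < (Q p).natDegree := by
    have hdeg : p.degreeOf 0 < N + 3 :=
      (Finset.le_sup (f := fun q => q.degreeOf 0) hp).trans_lt (by omega)
    refine lt_of_lt_of_le (by omega) (Polynomial.le_natDegree_of_ne_zero (n := N + 3) ?_)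
    simp [Q, Polynomial.coeff_X_pow, coeff_aeval_X_X_pow_add_three (by omega) hdeg, hcoeff p hp,
      show N + 1 ≠ 2 * N by omega]
  have hlarge : ∀ᶠ k : ℕ in atTop,
      0 < k ∧ ∀ p ∈ F, 3 * ε * (k : ℝ) ^ (N + 1) < |(Q p).eval (k : ℝ)| :=
    (eventually_gt_atTop 0).and <| (eventually_all_finset F).2 fun p hp =>
      tendsto_natCast_atTop_atTop.eventually <|
        Polynomial.eventually_mul_pow_lt_abs_eval (hQdeg p hp) _
  obtain ⟨k, hk, hkQ⟩ := hlarge.exists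
  obtain ⟨p, hp, hpk⟩ := hdesc k (k ^ N) hk (by positivity)
  push_cast at hpk
  have hQk : (Q p).eval (k : ℝ) = h k (k ^ N) - (k : ℝ) ^ (N + 3) - (k : ℝ) ^ (2 * N + 2) := by
    simp [Q, eval_aeval_X_X_pow, ← hpk]
  have hbound := abs_sub_le_of_abs_div_sub_le (x := k) (N := N) (by exact_mod_cast hk) (by omega)
    (by simpa using hclose k (k ^ N) hk (by positivity))
  have hbeats := hkQ p hp
  rw [hQk] at hbeats
  linarith

/-- If `h : ℕ₊ × ℕ₊ → ℝ` is weakly-described by a finite set of good two-variable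
polynomials in each of which the coefficient of the monomial `k³·c` is zero, then
`(k, c) ↦ h(k, c)/(k³+k²+kc)` does not uniformly approximate
`(k, c) ↦ (k²+kc)kc/(k³+k²+kc)`. -/
theorem no_k3c_monomial_not_approx (h : ℕ → ℕ → ℝ)
    (F : Finset (MvPolynomial (Fin 2) ℝ))
    (hgood : ∀ p ∈ F, GoodPoly p)
    (hcoeff : ∀ p ∈ F,
      MvPolynomial.coeff (Finsupp.single 0 3 + Finsupp.single 1 1) p = 0)
    (hdesc : ∀ k c : ℕ, 0 < k → 0 < c →
      ∃ p ∈ F, eval ![(k : ℝ), (c : ℝ)] p = h k c) :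
    ∀ ε : ℝ, 0 < ε → ∃ k c : ℕ, 0 < k ∧ 0 < c ∧
      |h k c / ((k : ℝ) ^ 3 + (k : ℝ) ^ 2 + (k : ℝ) * (c : ℝ)) -
        ((k : ℝ) ^ 2 + (k : ℝ) * (c : ℝ)) * (k : ℝ) * (c : ℝ) /
          ((k : ℝ) ^ 3 + (k : ℝ) ^ 2 + (k : ℝ) * (c : ℝ))| > ε :=
  no_k3c_monomial_not_approx_general h F hcoeff hdesc
end

section
/- Let h : ℕ₊ × ℕ₊ → ℝ (arguments written (k, c)) be describable, i.e., there exists a finite set F of good real polynomials in the two variables k, c such that for all k, c ∈ ℕ₊ there exists p ∈ F with p(k, c) = h(k, c). Then for every ε > 0 there exist k, c ∈ ℕ₊ such that |h(k, c) − (k²+kc)kc/(k³+k²+kc)| > ε. In particular, h does not uniformly approximate (k, c) ↦ (k²+kc)kc/(k³+k²+kc). -/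
/-!
Suppose `|h - targetRatio| ≤ ε` everywhere and fix `c`. One polynomial `p` of the finite family
agrees with `h(·, c)` at infinitely many `k`; for `k ≥ c` the target lies in `[c - 1, 2c]`, so the
one-variable polynomial `p(·, c)` is bounded along an unbounded set, hence constant. Its value is
then `p(0, c)`, which goodness reduces to the constant term `p(0, 0)`, and it is `≥ c - 1 - ε`.
Letting `c` exceed every constant term of the family gives a contradiction.
-/

open MvPolynomial

open Filter

theorem Polynomial.degree_le_zero_of_frequently_abs_le {𝕜 : Type*} [NormedField 𝕜]
    [LinearOrder 𝕜] [IsStrictOrderedRing 𝕜] [OrderTopology 𝕜] {P : Polynomial 𝕜} {B : 𝕜}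
    (hP : ∃ᶠ x in atTop, |P.eval x| ≤ B) : P.degree ≤ 0 := by
  by_contra! hdeg
  obtain ⟨x, hle, hgt⟩ :=
    (hP.and_eventually ((P.abs_tendsto_atTop hdeg).eventually_gt_atTop B)).exists
  exact hgt.not_ge hle

theorem GoodPoly.eval_zero_left {p : MvPolynomial (Fin 2) ℝ} (hp : GoodPoly p) (c : ℝ) :
    eval ![0, c] p = constantCoeff p := by
  rw [eval_eq', constantCoeff_eq, Finset.sum_eq_single 0]
  · simp
  · intro m hm hm0
    have hm0' : 0 < m 0 := by
      by_contra! h0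
      refine hm0 (Finsupp.ext fun i => ?_)
      fin_cases i
      · simpa using h0
      · simpa using Nat.eq_zero_of_not_pos fun h1 => (hp m hm h1).not_ge h0
    simp [Fin.prod_univ_two, zero_pow hm0'.ne']
  · intro h
    simp [notMem_support_iff.mp h]

theorem GoodPoly.eval_eq_constantCoeff_of_frequently_abs_le {p : MvPolynomial (Fin 2) ℝ}
    (hp : GoodPoly p) {c B : ℝ} (hB : ∃ᶠ x in atTop, |eval ![x, c] p| ≤ B) (x : ℝ) :
    eval ![x, c] p = constantCoeff p := by
  set q := Polynomial.map (eval ![c]) (finSuccEquiv ℝ 1 p)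
  have hq (y : ℝ) : eval ![y, c] p = q.eval y := eval_eq_eval_mv_eval' ![c] y p
  simp only [hq] at hB
  rw [← hp.eval_zero_left c, hq, hq,
    Polynomial.eq_C_of_degree_le_zero (Polynomial.degree_le_zero_of_frequently_abs_le hB)]
  simp

noncomputable def targetRatio (k c : ℝ) : ℝ := (k ^ 2 + k * c) * k * c / (k ^ 3 + k ^ 2 + k * c)

theorem targetRatio_mem_Icc {k c : ℝ} (hc : 0 ≤ c) (hck : c ≤ k) (hk : 0 < k) :
    targetRatio k c ∈ Set.Icc (c - 1) (2 * c) := by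
  have hden : 0 < k ^ 3 + k ^ 2 + k * c := by positivity
  rw [targetRatio, Set.mem_Icc, le_div_iff₀ hden, div_le_iff₀ hden]
  constructor
  · nlinarith [mul_nonneg (mul_nonneg hk.le hk.le) (sub_nonneg.mpr hck), mul_nonneg hk.le hc,
      mul_nonneg (mul_nonneg hk.le hc) (mul_nonneg hk.le hc)]
  · nlinarith [mul_nonneg (mul_nonneg (mul_nonneg hk.le hk.le) hc) (sub_nonneg.mpr hck)]

theorem exists_constantCoeff_ge_of_approx {h : ℕ → ℕ → ℝ} {F : Finset (MvPolynomial (Fin 2) ℝ)}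
    (hgood : ∀ p ∈ F, GoodPoly p)
    (hdesc : ∀ k c : ℕ, 0 < k → 0 < c → ∃ p ∈ F, eval ![(k : ℝ), (c : ℝ)] p = h k c)
    {ε : ℝ} (happrox : ∀ k c : ℕ, 0 < k → 0 < c → |h k c - targetRatio (k : ℝ) (c : ℝ)| ≤ ε)
    {c : ℕ} (hc : 0 < c) : ∃ p ∈ F, (c : ℝ) - 1 - ε ≤ constantCoeff p := by
  have hfreq : ∃ᶠ k : ℕ in atTop, ∃ p ∈ F, eval ![(k : ℝ), (c : ℝ)] p = h k c :=
    ((eventually_gt_atTop 0).mono fun k hk => hdesc k c hk hc).frequently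
  obtain ⟨p, hpF, hp⟩ := F.frequently_exists.mp hfreq
  have hwindow : ∃ᶠ k : ℕ in atTop,
      eval ![(k : ℝ), (c : ℝ)] p ∈ Set.Icc ((c : ℝ) - 1 - ε) (2 * c + ε) := by
    refine (hp.and_eventually (eventually_ge_atTop c)).mono fun k ⟨hk, hck⟩ => ?_
    have hkpos : 0 < k := hc.trans_le hck
    obtain ⟨hlo, hhi⟩ := targetRatio_mem_Icc (Nat.cast_nonneg c) (Nat.cast_le.mpr hck)
      (Nat.cast_pos.mpr hkpos)
    have := abs_le.mp (happrox k c hkpos hc)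
    rw [hk]
    constructor <;> linarith
  have hconst := (hgood p hpF).eval_eq_constantCoeff_of_frequently_abs_le
    (tendsto_natCast_atTop_atTop.frequently
      (hwindow.mono fun k hk => abs_le_max_abs_abs hk.1 hk.2))
  obtain ⟨k, hk, -⟩ := hwindow.exists
  exact ⟨p, hpF, hconst k ▸ hk⟩

/-- If `h : ℕ₊ × ℕ₊ → ℝ` is describable, i.e. weakly-described by a finite set of good
polynomials in `k, c`, then `h` does not uniformly approximate
`(k, c) ↦ (k²+kc)kc/(k³+k²+kc)`. -/
theorem describable_not_approx_ratio (h : ℕ → ℕ → ℝ)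
    (F : Finset (MvPolynomial (Fin 2) ℝ))
    (hgood : ∀ p ∈ F, GoodPoly p)
    (hdesc : ∀ k c : ℕ, 0 < k → 0 < c →
      ∃ p ∈ F, eval ![(k : ℝ), (c : ℝ)] p = h k c) :
    ∀ ε : ℝ, 0 < ε → ∃ k c : ℕ, 0 < k ∧ 0 < c ∧
      |h k c - ((k : ℝ) ^ 2 + (k : ℝ) * (c : ℝ)) * (k : ℝ) * (c : ℝ) /
          ((k : ℝ) ^ 3 + (k : ℝ) ^ 2 + (k : ℝ) * (c : ℝ))| > ε := by
  intro ε _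
  by_contra! happrox
  obtain ⟨M, hM⟩ := (F.image fun p => constantCoeff p).bddAbove
  obtain ⟨n, hn⟩ := exists_nat_gt (M + ε)
  obtain ⟨p, hpF, hp⟩ :=
    exists_constantCoeff_ge_of_approx hgood hdesc happrox (Nat.succ_pos n)
  have := hM (Finset.mem_coe.mpr (Finset.mem_image_of_mem _ hpF))
  push_cast at hp
  linarith
end

section
/- Let q ∈ ℕ₊ and set a := 1/q. Define f : [0,1] → ℝ^q by f(x)ᵢ := max(0, min(x − a(i−1), a)) for i ∈ {1, …, q}. Let x₁, …, x_m ∈ [0,1] with m ≥ 1, and for each i ∈ {1, …, q} define gᵢ := min(a, Σ_{j=1}^m f(x_j)ᵢ). Then max(x₁, …, x_m) ≤ Σ_{i=1}^q gᵢ ≤ max(x₁, …, x_m) + a. -/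
/-- Max-by-Sum lemma: with `a = 1/q`, representing each `x j ∈ [0,1]` almost-unarily as
the vector `i ↦ max 0 (min (x j - a*i) a) ∈ ℝ^q` (`i = 0, …, q-1`), summing the
representations over `j`, capping each coordinate at `a`, and summing the coordinates,
yields a value between `max j (x j)` and `max j (x j) + a`. -/
theorem max_by_sum (q m : ℕ) (hq : 0 < q) (hm : 0 < m)
    (x : Fin m → ℝ) (hx : ∀ j, x j ∈ Set.Icc (0 : ℝ) 1) :
    Finset.univ.sup' (Finset.univ_nonempty_iff.mpr ⟨⟨0, hm⟩⟩) x ≤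
        ∑ i : Fin q, min ((1 : ℝ) / q)
          (∑ j : Fin m, max 0 (min (x j - (1 / q) * ((i : ℕ) : ℝ)) (1 / q))) ∧
      ∑ i : Fin q, min ((1 : ℝ) / q)
          (∑ j : Fin m, max 0 (min (x j - (1 / q) * ((i : ℕ) : ℝ)) (1 / q))) ≤
        Finset.univ.sup' (Finset.univ_nonempty_iff.mpr ⟨⟨0, hm⟩⟩) x + 1 / q := by
  have hq' : (0:ℝ) < q := by exact_mod_cast hq
  set a : ℝ := 1 / q with ha_def
  have ha : 0 < a := by positivity
  have haq : a * (q:ℝ) = 1 := by rw [ha_def]; field_simp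
  set M := Finset.univ.sup' (Finset.univ_nonempty_iff.mpr ⟨⟨0, hm⟩⟩) x with hM
  obtain ⟨j₀, _, hj₀⟩ := Finset.exists_mem_eq_sup' (Finset.univ_nonempty_iff.mpr ⟨⟨0, hm⟩⟩) x
  have hMx : M = x j₀ := hj₀
  have hle : ∀ j, x j ≤ M := fun j => Finset.le_sup' x (Finset.mem_univ j)
  have hM0 : 0 ≤ M := le_trans (hx j₀).1 (hle j₀)
  have hM1 : M ≤ 1 := hMx ▸ (hx j₀).2
  have point : ∀ (y:ℝ) (i:ℕ), max 0 (min (y - a*i) a) = min y (a*((i:ℝ)+1)) - min y (a*i) := by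
    intro y i
    rw [max_def, min_def, min_def, min_def]
    split_ifs <;> linarith
  have tele : ∀ y ∈ Set.Icc (0:ℝ) 1, ∑ i : Fin q, max 0 (min (y - a*((i:ℕ):ℝ)) a) = y := by
    intro y hy
    calc ∑ i : Fin q, max 0 (min (y - a*((i:ℕ):ℝ)) a)
        = ∑ i ∈ Finset.range q, max 0 (min (y - a*(i:ℝ)) a) :=
          Fin.sum_univ_eq_sum_range (fun i : ℕ => max 0 (min (y - a*(i:ℝ)) a)) q
      _ = ∑ i ∈ Finset.range q, (min y (a*((i:ℝ)+1)) - min y (a*(i:ℝ))) :=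
          Finset.sum_congr rfl fun i _ => point y i
      _ = min y (a*(q:ℝ)) - min y (a*(0:ℝ)) := by
          have hsub := Finset.sum_range_sub (fun i : ℕ => min y (a*(i:ℝ))) q
          push_cast at hsub
          exact hsub
      _ = y := by
          rw [haq]
          norm_num
          rw [min_eq_left hy.2, min_eq_right hy.1, sub_zero]
  constructor
  · -- lower bound
    calc M = x j₀ := hMx
      _ = ∑ i : Fin q, max 0 (min (x j₀ - a*((i:ℕ):ℝ)) a) := (tele _ (hx j₀)).symm
      _ ≤ ∑ i : Fin q, min a (∑ j : Fin m, max 0 (min (x j - a*((i:ℕ):ℝ)) a)) := by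
          apply Finset.sum_le_sum
          intro i _
          apply le_min
          · exact max_le ha.le (min_le_right _ _)
          · exact Finset.single_le_sum (f := fun j => max 0 (min (x j - a*((i:ℕ):ℝ)) a))
              (fun j _ => le_max_left _ _) (Finset.mem_univ j₀)
  · -- upper bound
    have step : ∀ i : Fin q, min a (∑ j : Fin m, max 0 (min (x j - a*((i:ℕ):ℝ)) a))
        ≤ if ((i:ℕ):ℝ) < M * q then a else 0 := by
      intro i
      split_ifs with h
      · exact min_le_left _ _
      · push_neg at h
        have hMi : M ≤ a * (i:ℕ) := by
          rw [ha_def, div_mul_eq_mul_div, le_div_iff₀ hq']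
          linarith
        have hz : ∑ j : Fin m, max 0 (min (x j - a*((i:ℕ):ℝ)) a) = 0 := by
          apply Finset.sum_eq_zero
          intro j _
          have hj : x j - a*((i:ℕ):ℝ) ≤ 0 := by linarith [hle j]
          rw [max_eq_left (le_trans (min_le_left _ _) hj)]
        rw [hz]
        exact min_le_right _ _
    calc ∑ i : Fin q, min a (∑ j : Fin m, max 0 (min (x j - a*((i:ℕ):ℝ)) a))
        ≤ ∑ i : Fin q, (if ((i:ℕ):ℝ) < M * q then a else 0) :=
          Finset.sum_le_sum fun i _ => step i
      _ = ((Finset.univ.filter (fun i : Fin q => ((i:ℕ):ℝ) < M * q)).card : ℝ) * a := by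
          rw [Finset.sum_ite, Finset.sum_const, Finset.sum_const_zero, add_zero, nsmul_eq_mul]
      _ ≤ (M * q + 1) * a := by
          apply mul_le_mul_of_nonneg_right _ ha.le
          have hcard : (Finset.univ.filter (fun i : Fin q => ((i:ℕ):ℝ) < M * q)).card
              ≤ Nat.ceil (M * q) := by
            rw [← Finset.card_range (Nat.ceil (M * q))]
            refine Finset.card_le_card_of_injOn (fun i : Fin q => (i:ℕ)) ?_ ?_
            · intro i hi
              exact Finset.mem_range.mpr (Nat.lt_ceil.mpr (Finset.mem_filter.mp hi).2)
            · intro i _ j _ h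
              exact Fin.ext h
          calc ((Finset.univ.filter (fun i : Fin q => ((i:ℕ):ℝ) < M * q)).card : ℝ)
              ≤ (Nat.ceil (M * q) : ℝ) := by exact_mod_cast hcard
            _ ≤ M * q + 1 := (Nat.ceil_lt_add_one (by positivity)).le
      _ ≤ M + a := by nlinarith
end
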